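/- Let S' → ℝ^n = ℝ^p × ℝ^{n−p} be a succession of permissible blow-ups, and let B be a closed semi-algebraic subset of S' with dim B < n which is almost strictly allowable in S'. Then there is a succession of permissible blow-ups μ: S̃' → S' such that μ^{-1}(B) is strictly allowable. -/

import Mathlib

/-!
Common definitions: semi-algebraic sets and maps, dimension via the Zariski closure,
Nash submanifolds and Nash maps, generically defined differential forms and their
(absolute and oriented) integrals, faces and (strict) allowability, permissible blow-ups
(encoded combinatorially through their fans of monomial charts), logarithmic forms, and
the complex (admissible) setting.
-/

open MeasureTheory Set
open scoped ENNReal NNReal Topology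

noncomputable section

/-- `ℝ^ι` as a Euclidean space. -/
abbrev Euc (ι : Type) [Fintype ι] : Type := EuclideanSpace ℝ ι

namespace SA

variable {ι κ : Type} [Fintype ι] [Fintype κ]

/-- A subset of `ℝ^ι` is semi-algebraic if it is a finite union of basic sets,
each defined by finitely many polynomial equations and strict inequalities. -/
def IsSemialgebraic (S : Set (Euc ι)) : Prop :=
  ∃ (N : ℕ) (P Q : Fin N → Finset (MvPolynomial ι ℝ)),
    S = ⋃ a : Fin N, {x | (∀ f ∈ P a, MvPolynomial.eval (fun i => x i) f = 0) ∧
      ∀ g ∈ Q a, 0 < MvPolynomial.eval (fun i => x i) g}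

/-- The ideal of polynomials vanishing on a subset of `ℝ^ι`. -/
def vanishingIdeal (S : Set (Euc ι)) : Ideal (MvPolynomial ι ℝ) where
  carrier := {f | ∀ x ∈ S, MvPolynomial.eval (fun i => x i) f = 0}
  zero_mem' := by intro x _; simp
  add_mem' := by intro a b ha hb x hx; simp [ha x hx, hb x hx]
  smul_mem' := by intro c a ha x hx; simp [ha x hx]

/-- The (real) Zariski closure of a subset of `ℝ^ι`. -/
def zariskiClosure (S : Set (Euc ι)) : Set (Euc ι) :=
  {x | ∀ f ∈ vanishingIdeal S, MvPolynomial.eval (fun i => x i) f = 0}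

/-- The dimension of a semi-algebraic set: the Krull dimension of the coordinate ring
of its Zariski closure. -/
def dim (S : Set (Euc ι)) : WithBot ℕ∞ :=
  ringKrullDim (MvPolynomial ι ℝ ⧸ vanishingIdeal S)

/-- Projection of `ℝ^(ι ⊕ κ)` onto the first group of coordinates. -/
def projL (z : Euc (ι ⊕ κ)) : Euc ι := WithLp.toLp 2 (fun i => z (Sum.inl i))

/-- Projection of `ℝ^(ι ⊕ κ)` onto the second group of coordinates. -/
def projR (z : Euc (ι ⊕ κ)) : Euc κ := WithLp.toLp 2 (fun j => z (Sum.inr j))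

/-- A map defined on a semi-algebraic set is semi-algebraic if its graph is. -/
def IsSemialgebraicOn (S : Set (Euc ι)) (f : Euc ι → Euc κ) : Prop :=
  IsSemialgebraic {z : Euc (ι ⊕ κ) | projL z ∈ S ∧ projR z = f (projL z)}

/-- A real-valued function on a semi-algebraic set is semi-algebraic if its graph is. -/
def IsSemialgebraicFunOn (S : Set (Euc ι)) (f : Euc ι → ℝ) : Prop :=
  IsSemialgebraic {z : Euc (ι ⊕ Fin 1) | projL z ∈ S ∧ z (Sum.inr 0) = f (projL z)}

/-- `M` is a `d`-dimensional smooth submanifold of `ℝ^ι`: near each of its points it can be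
straightened, by a diffeomorphism between open sets, onto a `d`-dimensional coordinate
subspace. -/
def IsSmoothSubmanifold (d : ℕ) (M : Set (Euc ι)) : Prop :=
  ∀ x ∈ M, ∃ (U V : Set (Euc ι)) (φ ψ : Euc ι → Euc ι) (J : Finset ι),
    IsOpen U ∧ x ∈ U ∧ IsOpen V ∧
    ContDiffOn ℝ ((⊤ : ℕ∞) : WithTop ℕ∞) φ U ∧ ContDiffOn ℝ ((⊤ : ℕ∞) : WithTop ℕ∞) ψ V ∧
    Set.MapsTo φ U V ∧ (∀ y ∈ U, ψ (φ y) = y) ∧ (∀ y ∈ V, φ (ψ y) = y) ∧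
    J.card = d ∧ φ '' (U ∩ M) = V ∩ {y | ∀ i ∉ J, y i = 0}

/-- A Nash submanifold of `ℝ^ι` of dimension `d`: a semi-algebraic subset which is a
`d`-dimensional smooth submanifold (such a set is automatically Nash). -/
def IsNashSubmanifold (d : ℕ) (M : Set (Euc ι)) : Prop :=
  IsSemialgebraic M ∧ IsSmoothSubmanifold d M

/-- A map is smooth on a subset `S` if near each point of `S` it admits a smooth local
extension. -/
def SmoothOnSet (S : Set (Euc ι)) (f : Euc ι → Euc κ) : Prop :=
  ∀ x ∈ S, ∃ (U : Set (Euc ι)) (g : Euc ι → Euc κ), IsOpen U ∧ x ∈ U ∧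
    ContDiffOn ℝ ((⊤ : ℕ∞) : WithTop ℕ∞) g U ∧ Set.EqOn f g (S ∩ U)

/-- A Nash map on `S`: semi-algebraic and smooth on `S`. -/
def IsNashMapOn (S : Set (Euc ι)) (f : Euc ι → Euc κ) : Prop :=
  IsSemialgebraicOn S f ∧ SmoothOnSet S f

/-- A Nash (real-valued) function on `S`: semi-algebraic and smooth on `S`. -/
def IsNashFunOn (S : Set (Euc ι)) (f : Euc ι → ℝ) : Prop :=
  IsSemialgebraicFunOn S f ∧
  ∀ x ∈ S, ∃ (U : Set (Euc ι)) (g : Euc ι → ℝ), IsOpen U ∧ x ∈ U ∧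
    ContDiffOn ℝ ((⊤ : ℕ∞) : WithTop ℕ∞) g U ∧ Set.EqOn f g (S ∩ U)

/-- A Nash diffeomorphism from `U` onto `U'`: a bijective Nash map with Nash inverse. -/
def IsNashDiffeoOn (U : Set (Euc ι)) (U' : Set (Euc κ)) (f : Euc ι → Euc κ) : Prop :=
  IsNashMapOn U f ∧ Set.BijOn f U U' ∧
    ∃ g : Euc κ → Euc ι, IsNashMapOn U' g ∧ Set.InvOn g f U U'

/-- A smooth `m`-form on `Ω ⊆ ℝ^ι`, encoded as a function of a point and an `m`-tuple of
vectors: at each point of `Ω` it is an alternating multilinear form, and for each fixed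
tuple of vectors it depends smoothly on the point. -/
def IsSmoothForm (m : ℕ) (Ω : Set (Euc ι)) (ψ : Euc ι → (Fin m → Euc ι) → ℝ) : Prop :=
  (∀ x ∈ Ω, ∃ A : AlternatingMap ℝ (Euc ι) ℝ (Fin m), ψ x = ⇑A) ∧
  ∀ v : Fin m → Euc ι, ContDiffOn ℝ ((⊤ : ℕ∞) : WithTop ℕ∞) (fun x => ψ x v) Ω

/-- Pull-back of an `m`-form `ψ` along a map `h`, differentiated within the set `U`. -/
def pullback {m : ℕ} (h : Euc ι → Euc κ) (U : Set (Euc ι))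
    (ψ : Euc κ → (Fin m → Euc κ) → ℝ) : Euc ι → (Fin m → Euc ι) → ℝ :=
  fun x v => ψ (h x) fun j => fderivWithin ℝ h U x (v j)

/-- The orthonormal `m`-frames tangent to `U` at `x`. -/
def tangentFrames (m : ℕ) (U : Set (Euc ι)) (x : Euc ι) : Set (Fin m → Euc ι) :=
  {v | Orthonormal ℝ v ∧ ∀ j, v j ∈ tangentConeAt ℝ U x}

/-- The integral `∫_U |φ|` of the density of an `m`-form `φ` over `U`: the integral, with
respect to the `m`-dimensional Hausdorff measure, of the norm of `φ` on tangent
orthonormal frames. -/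
def absIntegral (m : ℕ) (U : Set (Euc ι)) (φ : Euc ι → (Fin m → Euc ι) → ℝ) : ℝ≥0∞ :=
  ∫⁻ x in U, ENNReal.ofReal (⨆ v ∈ tangentFrames m U x, |φ x v|) ∂μH[(m : ℝ)]

/-- An orientation of an `m`-dimensional submanifold `U`, presented as a continuous choice
of tangent orthonormal `m`-frames. -/
def IsOrientationFrame (m : ℕ) (U : Set (Euc ι)) (o : Euc ι → Fin m → Euc ι) : Prop :=
  ContinuousOn o U ∧ ∀ x ∈ U, o x ∈ tangentFrames m U x

/-- The integral `∫_U φ` of an `m`-form `φ` over `U`, oriented by the frame `o`. -/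
def orIntegral (m : ℕ) (U : Set (Euc ι)) (o : Euc ι → Fin m → Euc ι)
    (φ : Euc ι → (Fin m → Euc ι) → ℝ) : ℝ :=
  ∫ x in U, φ x (o x) ∂μH[(m : ℝ)]

/-- The standard (positively oriented, orthonormal) frame of `ℝ^m`. -/
def stdFrame (m : ℕ) : Fin m → Euc (Fin m) := fun j => EuclideanSpace.single j 1

/-- `δ(f)`: the maximal cardinality of the finite fibres of `f` restricted to `S`
(`0` if every fibre is infinite). -/
def delta (S : Set (Euc ι)) (f : Euc ι → Euc κ) : ℕ :=
  sSup {k : ℕ | ∃ u ∈ f '' S, (S ∩ f ⁻¹' {u}).Finite ∧ (S ∩ f ⁻¹' {u}).ncard = k}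

/-- A member of `Op(S)` for a semi-algebraic set `S` of dimension `≤ m`: if `dim S = m`, a
dense open semi-algebraic subset `U ⊆ S` which is an `m`-dimensional Nash submanifold with
`dim (S ∖ U) < m`; integrals of `m`-forms over `S` are computed over such a `U`. By the
convention of the paper, if `dim S < m` the integral is set to `0`, i.e. `U = ∅`. -/
def PullbackDomain (m : ℕ) (S U : Set (Euc ι)) : Prop :=
  (dim S = ((m : ℕ∞) : WithBot ℕ∞) ∧ U ⊆ S ∧ (∃ O, IsOpen O ∧ U = S ∩ O) ∧
    IsSemialgebraic U ∧ IsNashSubmanifold m U ∧ dim (S \ U) < ((m : ℕ∞) : WithBot ℕ∞)) ∨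
  (dim S < ((m : ℕ∞) : WithBot ℕ∞) ∧ U = ∅)

/-- A domain over which the pull-back of an `m`-form along `h` is defined: a member of
`Op(S)` on which `h` is a Nash map. -/
def IntegralDomain (m : ℕ) (S U : Set (Euc ι)) (h : Euc ι → Euc κ) : Prop :=
  PullbackDomain m S U ∧ IsNashMapOn U h

/-- The face of `ℝ^(ι⊕κ)` cut out by the vanishing of the distinguished coordinates in `I`. -/
def face (κ : Type) [Fintype κ] (I : Finset ι) : Set (Euc (ι ⊕ κ)) :=
  {z | ∀ i ∈ I, z (Sum.inl i) = 0}

/-- Allowability: the intersection with every proper face has dimension strictly smaller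
than the dimension of the face. -/
def Allowable (C : Set (Euc (ι ⊕ κ))) : Prop :=
  ∀ I : Finset ι, I.Nonempty →
    dim (C ∩ face κ I) + ((I.card : ℕ∞) : WithBot ℕ∞) <
      (((Fintype.card ι + Fintype.card κ : ℕ) : ℕ∞) : WithBot ℕ∞)

/-- Strict allowability with respect to the face cut out by `I`: the Zariski closure of the
intersection contains no face. -/
def StrictlyAllowableWrt (C : Set (Euc (ι ⊕ κ))) (I : Finset ι) : Prop :=
  ∀ I' : Finset ι, ¬ (face κ I' ⊆ zariskiClosure (C ∩ face κ I))

/-- Strict allowability: strict allowability with respect to every face (including the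
ambient space itself). -/
def StrictlyAllowable (C : Set (Euc (ι ⊕ κ))) : Prop :=
  ∀ I : Finset ι, StrictlyAllowableWrt C I

/-- Almost strict allowability: strict allowability with respect to every proper face. -/
def AlmostStrictlyAllowable (C : Set (Euc (ι ⊕ κ))) : Prop :=
  ∀ I : Finset ι, I.Nonempty → StrictlyAllowableWrt C I

/-- The set of columns ("rays") of a matrix. -/
def raysOf {p : ℕ} (M : Matrix (Fin p) (Fin p) ℤ) : Finset (Fin p → ℤ) :=
  Finset.univ.image fun j i => M i j

/-- The set of columns of `M` indexed by `J`. -/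
def colSet {p : ℕ} (M : Matrix (Fin p) (Fin p) ℤ) (J : Finset (Fin p)) :
    Finset (Fin p → ℤ) :=
  J.image fun j i => M i j

/-- Star subdivision of a smooth fan (recorded through its maximal cones, each given by the
matrix of its ray generators) at the cone spanned by the rays in `R`. -/
def starSubdiv {p : ℕ} (F : Finset (Matrix (Fin p) (Fin p) ℤ)) (R : Finset (Fin p → ℤ)) :
    Finset (Matrix (Fin p) (Fin p) ℤ) :=
  F.filter (fun M => ¬ R ⊆ raysOf M) ∪
  (F.filter (fun M => R ⊆ raysOf M)).biUnion fun M =>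
    (Finset.univ.filter fun j : Fin p => (fun i => M i j) ∈ R).image fun j =>
      M.updateCol j fun i => ∑ v ∈ R, v i

/-- Successions of permissible blow-ups over a given stage, recorded combinatorially through
the fans of their monomial charts: each permissible blow-up is the star subdivision of the
fan at a face of codimension `≥ 2` (a cone spanned by at least two of the rays of a maximal
cone). -/
inductive IsBlowupTower (p : ℕ) :
    Finset (Matrix (Fin p) (Fin p) ℤ) → Finset (Matrix (Fin p) (Fin p) ℤ) → Prop
  | refl (F : Finset (Matrix (Fin p) (Fin p) ℤ)) : IsBlowupTower p F F
  | step (F₀ F : Finset (Matrix (Fin p) (Fin p) ℤ)) (h : IsBlowupTower p F₀ F)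
      (M : Matrix (Fin p) (Fin p) ℤ) (hM : M ∈ F) (J : Finset (Fin p)) (hJ : 2 ≤ J.card) :
      IsBlowupTower p F₀ (starSubdiv F (colSet M J))

/-- A succession of permissible blow-ups of the base space itself (whose fan consists of the
single standard cone, with ray matrix `1`). -/
def IsBlowupFan (p : ℕ) (F : Finset (Matrix (Fin p) (Fin p) ℤ)) : Prop :=
  IsBlowupTower p {1} F

/-- A monomial chart map `ℝ^p × ℝ^q → ℝ^p × ℝ^q` of a succession of permissible blow-ups:
the monomial map with (nonnegative) exponent matrix `M` on the first factor and the
identity on the second. -/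
def monMap (p q : ℕ) (M : Matrix (Fin p) (Fin p) ℤ) (z : Euc (Fin p ⊕ Fin q)) :
    Euc (Fin p ⊕ Fin q) :=
  WithLp.toLp 2 (Sum.elim (fun i => ∏ j : Fin p, z (Sum.inl j) ^ (M i j).toNat) fun j => z (Sum.inr j))

/-- The monomial map with integer exponent matrix `N` (a transition map between charts). -/
def monMapZ (p q : ℕ) (N : Matrix (Fin p) (Fin p) ℤ) (z : Euc (Fin p ⊕ Fin q)) :
    Euc (Fin p ⊕ Fin q) :=
  WithLp.toLp 2 (Sum.elim (fun i => ∏ j : Fin p, z (Sum.inl j) ^ (N i j)) fun j => z (Sum.inr j))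

/-- The locus where the monomial map with exponent matrix `N` is regular. -/
def transDomain (p q : ℕ) (N : Matrix (Fin p) (Fin p) ℤ) : Set (Euc (Fin p ⊕ Fin q)) :=
  {z | ∀ i j, N i j < 0 → z (Sum.inl j) ≠ 0}

/-- A family of subsets of the charts of the succession of blow-ups with fan `F` defines a
global subset iff it is compatible with the transition maps between charts. -/
def CompatibleFamily (p q : ℕ) (F : Finset (Matrix (Fin p) (Fin p) ℤ))
    (B : Matrix (Fin p) (Fin p) ℤ → Set (Euc (Fin p ⊕ Fin q))) : Prop :=
  ∀ M ∈ F, ∀ M' ∈ F, ∀ z ∈ transDomain p q (M'⁻¹ * M),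
    monMapZ p q (M'⁻¹ * M) z ∈ transDomain p q (M⁻¹ * M') →
    monMapZ p q (M⁻¹ * M') (monMapZ p q (M'⁻¹ * M) z) = z →
    (z ∈ B M ↔ monMapZ p q (M'⁻¹ * M) z ∈ B M')

/-- The basic logarithmic `m`-form
`(dr_{i₁}/r_{i₁}) ∧ ⋯ ∧ (dr_{i_k}/r_{i_k}) ∧ dx_{j₁} ∧ ⋯ ∧ dx_{j_{m-k}}`
(`P = {i₁ < ⋯ < i_k}`, `Q = {j₁ < ⋯ < j_{m-k}}`) evaluated at the point `z` on the
vectors `v`. -/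
def logTerm (p q : ℕ) (m : ℕ) (P : Finset (Fin p)) (Q : Finset (Fin q))
    (z : Euc (Fin p ⊕ Fin q)) (v : Fin m → Euc (Fin p ⊕ Fin q)) : ℝ :=
  Matrix.det (Matrix.of fun l k : Fin m =>
    if hl : (l : ℕ) < P.card then
      v k (Sum.inl ((P.orderIsoOfFin rfl) ⟨l, hl⟩)) /
        z (Sum.inl ((P.orderIsoOfFin rfl) ⟨l, hl⟩))
    else if hq : (l : ℕ) - P.card < Q.card then
      v k (Sum.inr ((Q.orderIsoOfFin rfl) ⟨(l : ℕ) - P.card, hq⟩))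
    else 0)

/-- An `m`-form on `ℝ^p × ℝ^q` with logarithmic singularities along the hyperplanes
`{r_i = 0}`: away from these hyperplanes it is a sum of basic logarithmic forms with
coefficients smooth on all of `ℝ^p × ℝ^q`. -/
def IsLogForm (p q : ℕ) (m : ℕ)
    (ω : Euc (Fin p ⊕ Fin q) → (Fin m → Euc (Fin p ⊕ Fin q)) → ℝ) : Prop :=
  ∃ a : Finset (Fin p) × Finset (Fin q) → Euc (Fin p ⊕ Fin q) → ℝ,
    (∀ s, ContDiff ℝ ((⊤ : ℕ∞) : WithTop ℕ∞) (a s)) ∧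
    ∀ z, (∀ i : Fin p, z (Sum.inl i) ≠ 0) → ∀ v,
      ω z v = ∑ s ∈ Finset.univ.filter
          (fun s : Finset (Fin p) × Finset (Fin q) => s.1.card + s.2.card = m),
        a s z * logTerm p q m s.1 s.2 z v

section Projections
variable {p q' : ℕ}

/-- The projection `ℝ^p × ℝ^{q'+1} → ℝ^p × ℝ^{q'}` forgetting the last coordinate `x_n`. -/
def pr1 (z : Euc (Fin p ⊕ Fin (q' + 1))) : Euc (Fin p ⊕ Fin q') :=
  WithLp.toLp 2 (Sum.elim (fun i => z (Sum.inl i)) fun j => z (Sum.inr j.castSucc))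

/-- The projection `ℝ^p × ℝ^{q'} → ℝ^p` onto the first group of coordinates. -/
def pr2 (w : Euc (Fin p ⊕ Fin q')) : Euc (Fin p) := WithLp.toLp 2 (fun i => w (Sum.inl i))

/-- Adjoining a value of the last coordinate `x_n`. -/
def combineLast (w : Euc (Fin p ⊕ Fin q')) (s : ℝ) : Euc (Fin p ⊕ Fin (q' + 1)) :=
  WithLp.toLp 2 (Sum.elim (fun i => w (Sum.inl i)) fun j =>
    if h : (j : ℕ) < q' then w (Sum.inr ⟨j, h⟩) else s)

/-- The linear change of variables `x_i ↦ x_i + c_i x_n` (`p < i < n`), `x_n ↦ x_n`. -/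
def lc (c : Fin q' → ℝ) (z : Euc (Fin p ⊕ Fin (q' + 1))) : Euc (Fin p ⊕ Fin (q' + 1)) :=
  WithLp.toLp 2 (Sum.elim (fun i => z (Sum.inl i)) fun j =>
    if h : (j : ℕ) < q' then z (Sum.inr j) + c ⟨j, h⟩ * z (Sum.inr (Fin.last q')) else
      z (Sum.inr j))

/-- Condition (F): over the neighbourhood `V₀ = {|r_i| < ρ₀}` of the origin, the projection
forgetting `x_n`, restricted to `A ∩ {r_i = 0}`, has finite fibres (for each `i`). -/
def ConditionF (p q' : ℕ) (ρ₀ : ℝ) (A : Set (Euc (Fin p ⊕ Fin (q' + 1)))) : Prop :=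
  ∀ i : Fin p, ∀ w : Euc (Fin p ⊕ Fin q'), (∀ i' : Fin p, |w (Sum.inl i')| < ρ₀) →
    {z | z ∈ A ∧ z (Sum.inl i) = 0 ∧ pr1 z = w}.Finite

/-- `v(A|x_n; r)`: the supremum, over the points `T` of `ℝ^{n-1}` lying over `r ∈ ℝ^p`, of
the Lebesgue measure (with respect to `dx_n`) of the fibre of `A` over `T`. -/
def vfun (A : Set (Euc (Fin p ⊕ Fin (q' + 1)))) (r : Euc (Fin p)) : ℝ≥0∞ :=
  ⨆ w : {w : Euc (Fin p ⊕ Fin q') // pr2 w = r},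
    volume {s : ℝ | combineLast w.1 s ∈ A}

end Projections

/-- A Zariski open subset of `ℝ^ι`. -/
def IsZariskiOpen (W : Set (Euc ι)) : Prop :=
  ∃ T : Set (MvPolynomial ι ℝ),
    W = {x | ∃ f ∈ T, MvPolynomial.eval (fun i => x i) f ≠ 0}

/-- The set of points of `V` that are nonsingular in dimension `d`: near such a point, `V`
is cut out by `card ι − d` polynomials vanishing on `V` whose gradients at the point are
linearly independent. -/
def RegPts (d : ℕ) (V : Set (Euc ι)) : Set (Euc ι) :=
  {x | x ∈ V ∧ ∃ f : Fin (Fintype.card ι - d) → MvPolynomial ι ℝ,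
    (∀ j, f j ∈ vanishingIdeal V) ∧
    (∃ O : Set (Euc ι), IsOpen O ∧ x ∈ O ∧
      V ∩ O = {y | y ∈ O ∧ ∀ j, MvPolynomial.eval (fun i => y i) (f j) = 0}) ∧
    LinearIndependent ℝ
      (fun j => (WithLp.toLp 2 (fun i => MvPolynomial.eval (fun i' => x i')
        (MvPolynomial.pderiv i (f j))) : Euc ι))}

/-- The standard `m`-simplex `Δ^m ⊆ ℝ^m`. -/
def simplex (m : ℕ) : Set (Euc (Fin m)) := {x | (∀ i, 0 ≤ x i) ∧ ∑ i, x i ≤ 1}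

/-- The relative interior of the face of `Δ^m` given by the vanishing of the coordinates in
`J` and (if `b = true`) the equation `∑ x_i = 1`. -/
def relintFace (m : ℕ) (J : Finset (Fin m)) (b : Bool) : Set (Euc (Fin m)) :=
  {x | (∀ i ∈ J, x i = 0) ∧ (∀ i ∉ J, 0 < x i) ∧
    (if b then ∑ i, x i = 1 else ∑ i, x i < 1)}

/-- The vertices of `Δ^m`: `vert m 0 = 0` and `vert m (t+1) = e_t`. -/
def vert (m : ℕ) (t : Fin (m + 1)) : Euc (Fin m) :=
  WithLp.toLp 2 (fun i => if (i : ℕ) + 1 = (t : ℕ) then 1 else 0)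

/-- Barycentric coordinates of a point of `Δ^k`. -/
def bary {k : ℕ} (y : Euc (Fin k)) (l : Fin (k + 1)) : ℝ :=
  if h : (l : ℕ) = 0 then 1 - ∑ i, y i else y ⟨(l : ℕ) - 1, by have := l.isLt; omega⟩

/-- The `j`-th affine face map `Δ^k → Δ^{k+1}` (omitting the `j`-th vertex). -/
def faceMap (k : ℕ) (j : Fin (k + 2)) (y : Euc (Fin k)) : Euc (Fin (k + 1)) :=
  WithLp.toLp 2 (fun i => ∑ l : Fin (k + 1), bary y l * vert (k + 1) (j.succAbove l) i)

/-- The exterior derivative of a `k`-form (with smooth coefficients). -/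
def extDeriv (k : ℕ) (ψ : Euc ι → (Fin k → Euc ι) → ℝ) :
    Euc ι → (Fin (k + 1) → Euc ι) → ℝ :=
  fun x v => ∑ j : Fin (k + 1), (-1 : ℝ) ^ (j : ℕ) *
    fderiv ℝ (fun y => ψ y fun i => v (j.succAbove i)) x (v j)

/-- Adjoining a parameter value as an extra coordinate. -/
def pair {m : ℕ} (x : Euc (Fin m)) (t : ℝ) : Euc (Fin m ⊕ Fin 1) :=
  WithLp.toLp 2 (Sum.elim (fun i => x i) fun _ => t)

/-- `ℂ^n` identified with `ℝ^n × ℝ^n`: the `k`-th complex coordinate of the real point. -/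
def cxVec (n : ℕ) (w : Euc (Fin n ⊕ Fin n)) (k : Fin n) : ℂ :=
  Complex.ofReal (w (Sum.inl k)) + Complex.I * Complex.ofReal (w (Sum.inr k))

/-- The face `ℍ_I = {z_i = 0, i ∈ I}` of `ℂ^n`. -/
def cxFace (n : ℕ) (I : Finset (Fin n)) : Set (Euc (Fin n ⊕ Fin n)) :=
  {w | ∀ i ∈ I, cxVec n w i = 0}

/-- The divisor `D = ⋃ {z_k = 1}` of `ℂ^n`. -/
def cxD (n : ℕ) : Set (Euc (Fin n ⊕ Fin n)) :=
  {w | ∃ k : Fin n, cxVec n w k = 1}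

/-- `m`-admissibility of a closed semi-algebraic subset of `ℂ^n`:
`dim (A ∩ ℍ_I ∩ (ℂ^n − D)) ≤ m − 2|I|` for every `I`. -/
def mAdmissible (n m : ℕ) (A : Set (Euc (Fin n ⊕ Fin n))) : Prop :=
  ∀ I : Finset (Fin n),
    dim (A ∩ cxFace n I ∩ (cxD n)ᶜ) + (((2 * I.card : ℕ) : ℕ∞) : WithBot ℕ∞) ≤
      ((m : ℕ∞) : WithBot ℕ∞)

/-- The polar-coordinate parametrisation of the sector `i^α · ℂ₊`:
`(r, τ) ↦ i^α · (r/√(τ²+1)) · (1 + iτ)`. -/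
def polarC (α : ℕ) (r τ : ℝ) : ℂ :=
  Complex.I ^ α *
    (Complex.ofReal (r / Real.sqrt (τ ^ 2 + 1)) +
      Complex.I * Complex.ofReal (r * τ / Real.sqrt (τ ^ 2 + 1)))

/-- The product polar-coordinate map `π : C̃₊ⁿ → ℂⁿ` (in real coordinates), the `k`-th
factor landing in the sector of index `α k`. -/
def polarMap (n : ℕ) (α : Fin n → ℕ) (w : Euc (Fin n ⊕ Fin n)) : Euc (Fin n ⊕ Fin n) :=
  WithLp.toLp 2 (Sum.elim (fun k => (polarC (α k) (w (Sum.inl k)) (w (Sum.inr k))).re)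
    fun k => (polarC (α k) (w (Sum.inl k)) (w (Sum.inr k))).im)

/-- `C̃₊ⁿ = (ℝ_{≥0} × [−1,1])ⁿ`. -/
def tildeDomain (n : ℕ) : Set (Euc (Fin n ⊕ Fin n)) :=
  {w | ∀ k : Fin n, 0 ≤ w (Sum.inl k) ∧ |w (Sum.inr k)| ≤ 1}

/-- The map `q = q_{P,Q,R}` recording the coordinates `r_i (i ∈ P)`, `τ_j (j ∈ Q)` and
`(r_k, τ_k) (k ∈ R)`. -/
def qMap (n : ℕ) (P Q R : Finset (Fin n)) (w : Euc (Fin n ⊕ Fin n)) :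
    Euc (↥P ⊕ (↥Q ⊕ (↥R ⊕ ↥R))) :=
  WithLp.toLp 2 (Sum.elim (fun i => w (Sum.inl i.1))
    (Sum.elim (fun j => w (Sum.inr j.1))
      (Sum.elim (fun k => w (Sum.inl k.1)) fun k => w (Sum.inr k.1))))

/-- The basic complex logarithmic form `(dz₁/z₁ ∧ ⋯ ∧ dz_n/z_n) ∧ ⋀_{k∈R} dz̄_k`
evaluated at `z` on the (real) tangent vectors `v`. -/
def cxLogTerm (n m : ℕ) (R : Finset (Fin n)) (z : Euc (Fin n ⊕ Fin n))
    (v : Fin m → Euc (Fin n ⊕ Fin n)) : ℂ :=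
  Matrix.det (Matrix.of fun l k : Fin m =>
    if hl : (l : ℕ) < n then
      cxVec n (v k) ⟨l, hl⟩ / cxVec n z ⟨l, hl⟩
    else if hr : (l : ℕ) - n < R.card then
      starRingEnd ℂ (cxVec n (v k) ((R.orderIsoOfFin rfl) ⟨(l : ℕ) - n, hr⟩))
    else 0)

/-- An `(n, m−n)`-form on `ℂ^n` with logarithmic singularities along the coordinate
hyperplanes: a linear combination, with coefficients smooth functions on `ℂ^n`, of the
forms `(dz₁/z₁ ∧ ⋯ ∧ dz_n/z_n) ∧ ⋀_{k∈R} dz̄_k` with `|R| = m − n`. -/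
def IsCxLogForm (n m : ℕ)
    (ω : Euc (Fin n ⊕ Fin n) → (Fin m → Euc (Fin n ⊕ Fin n)) → ℂ) : Prop :=
  ∃ a : Finset (Fin n) → Euc (Fin n ⊕ Fin n) → ℂ,
    (∀ R, ContDiff ℝ ((⊤ : ℕ∞) : WithTop ℕ∞) (a R)) ∧
    ∀ z, (∀ k : Fin n, cxVec n z k ≠ 0) → ∀ v,
      ω z v = ∑ R ∈ Finset.univ.filter (fun R : Finset (Fin n) => R.card = m - n),
        a R z * cxLogTerm n m R z v

/-- The integral of the density `|φ|` of a complex-valued `m`-form over `U`. -/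
def absIntegralC (m : ℕ) (U : Set (Euc ι)) (φ : Euc ι → (Fin m → Euc ι) → ℂ) : ℝ≥0∞ :=
  ∫⁻ x in U, ENNReal.ofReal (⨆ v ∈ tangentFrames m U x, ‖φ x v‖) ∂μH[(m : ℝ)]

/-- The substitution homomorphism of the chart with exponent matrix `M`:
`x_i ↦ ∏_j x_j^{M i j}` on the first `p` variables. -/
def chartHom (k : Type) [CommSemiring k] (p q : ℕ) (M : Matrix (Fin p) (Fin p) ℤ) :
    MvPolynomial (Fin p ⊕ Fin q) k →ₐ[k] MvPolynomial (Fin p ⊕ Fin q) k :=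
  MvPolynomial.aeval (Sum.elim
    (fun i => ∏ j : Fin p,
      (MvPolynomial.X (Sum.inl j) : MvPolynomial (Fin p ⊕ Fin q) k) ^ (M i j).toNat)
    fun j => MvPolynomial.X (Sum.inr j))

/-- The product of the first `p` variables. -/
def torusMon (k : Type) [CommSemiring k] (p q : ℕ) : MvPolynomial (Fin p ⊕ Fin q) k :=
  ∏ i : Fin p, MvPolynomial.X (Sum.inl i)

/-- The ideal of the strict transform, in the chart with exponent matrix `M`, of the
subvariety cut out by `P`: the saturation, with respect to the exceptional coordinates, of
the image of `P` under the chart substitution. -/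
def strictIdeal (k : Type) [CommRing k] (p q : ℕ) (M : Matrix (Fin p) (Fin p) ℤ)
    (P : Ideal (MvPolynomial (Fin p ⊕ Fin q) k)) :
    Ideal (MvPolynomial (Fin p ⊕ Fin q) k) where
  carrier := {f | ∃ N : ℕ, torusMon k p q ^ N * f ∈ Ideal.map (chartHom k p q M) P}
  zero_mem' := ⟨0, by simp⟩
  add_mem' := by
    rintro a b ⟨Na, ha⟩ ⟨Nb, hb⟩
    refine ⟨Na + Nb, ?_⟩
    have h1 : torusMon k p q ^ (Na + Nb) * (a + b)
        = torusMon k p q ^ Nb * (torusMon k p q ^ Na * a)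
          + torusMon k p q ^ Na * (torusMon k p q ^ Nb * b) := by ring
    rw [h1]
    exact Ideal.add_mem _ (Ideal.mul_mem_left _ _ ha) (Ideal.mul_mem_left _ _ hb)
  smul_mem' := by
    rintro c a ⟨N, ha⟩
    refine ⟨N, ?_⟩
    have h1 : torusMon k p q ^ N * (c • a) = c * (torusMon k p q ^ N * a) := by
      rw [smul_eq_mul]; ring
    rw [h1]
    exact Ideal.mul_mem_left _ _ ha

/-- The ideal of the face `{x_i = 0, i ∈ I}`. -/
def faceIdeal (k : Type) [CommSemiring k] (p q : ℕ) (I : Finset (Fin p)) :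
    Ideal (MvPolynomial (Fin p ⊕ Fin q) k) :=
  Ideal.span ((fun i => (MvPolynomial.X (Sum.inl i) : MvPolynomial (Fin p ⊕ Fin q) k)) '' I)

end SA


/-!
In each chart `M` of `S'` the trace of `B` has dimension `< n`, so some polynomial `h ≠ 0`
vanishes on it. Through the monomial map with exponent matrix `N = M⁻¹ * M'`, a monomial
`r^a x^b` of `h` pulls back to `r^(a N) x^b`. If the vectors `a N`, for `a` running over the
`r`-exponents of `h`, have a least element `e`, the pull-back is `r^e` times a strict transform
that does not vanish identically on the smallest face `{r = 0}`. That face lies in every face and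
is fixed by the monomial maps, so the preimage of `B` is strictly allowable: off the coordinate
hyperplanes because of the strict transform, along each of them because `B` is almost strictly
allowable.

The `a N` are totally ordered once every covector `(a - a') M⁻¹` has constant sign on the rays
of the cone `M'`. A single covector `d` is made so by repeatedly star-subdividing a sign-changing
cone of largest badness at its rays of largest and of smallest `d`-value. The new cones are less
bad for the lexicographic badness (largest `|d|`-value, number of rays attaining it, number of
rays of sign opposite to all of those), so the multiset of badnesses decreases in the
Dershowitz–Manna order.
-/

namespace SA

open MvPolynomial
open scoped Matrix

section Zariski

variable {ι : Type} [Fintype ι]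

theorem zariskiClosure_mono {S T : Set (Euc ι)} (h : S ⊆ T) :
    zariskiClosure S ⊆ zariskiClosure T :=
  fun _ hx f hf => hx f fun y hy => hf y (h hy)

theorem exists_ne_zero_mem_vanishingIdeal {S : Set (Euc ι)}
    (hS : dim S < ((Fintype.card ι : ℕ∞) : WithBot ℕ∞)) :
    ∃ f, f ≠ 0 ∧ f ∈ vanishingIdeal S := by
  by_contra! h
  have hbot : vanishingIdeal S = ⊥ :=
    (Submodule.eq_bot_iff _).2 fun f hf => by_contra fun hf0 => h f hf0 hf
  rw [dim, hbot, ringKrullDim_eq_of_ringEquiv (RingEquiv.quotientBot _),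
    MvPolynomial.ringKrullDim_of_isNoetherianRing, ringKrullDim_eq_zero_of_field] at hS
  simp at hS

end Zariski

theorem eval_aeval {σ τ : Type} (x : τ → ℝ) (g : σ → MvPolynomial τ ℝ) (f : MvPolynomial σ ℝ) :
    eval x (aeval g f) = eval (fun i => eval x (g i)) f := by
  rw [aeval_eq_bind₁]
  exact aeval_bind₁ x g f

theorem eq_monomial_mul_divMonomial {σ R : Type} [CommSemiring R] {P : MvPolynomial σ R}
    {s : σ →₀ ℕ} (h : ∀ m ∈ P.support, s ≤ m) : P = monomial s 1 * P.divMonomial s := by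
  have hmod : P.modMonomial s = 0 := by
    ext m
    by_cases hle : s ≤ m
    · exact coeff_modMonomial_of_le _ hle
    · rw [coeff_modMonomial_of_not_le _ hle, coeff_zero]
      exact notMem_support_iff.1 fun hm => hle (h m hm)
  simpa [hmod] using (divMonomial_add_modMonomial P s).symm

/-! ### The smallest face -/

abbrev minFace (p q : ℕ) : Set (Euc (Fin p ⊕ Fin q)) :=
  face (Fin q) (Finset.univ : Finset (Fin p))

variable {p q : ℕ}

theorem eval_killCompl_inr (x : Fin q → ℝ) (f : MvPolynomial (Fin p ⊕ Fin q) ℝ) :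
    eval x (killCompl Sum.inr_injective f) = eval (Sum.elim 0 x) f := by
  rw [killCompl, eval_aeval]
  refine congrArg (fun v => eval v f) (funext fun k => ?_)
  cases k <;> simp

theorem minFace_subset_face (I : Finset (Fin p)) : minFace p q ⊆ face (Fin q) I :=
  fun _ hz i _ => hz i (Finset.mem_univ i)

theorem strictlyAllowableWrt_of_not_minFace_subset {C : Set (Euc (Fin p ⊕ Fin q))}
    {I : Finset (Fin p)} (h : ¬ minFace p q ⊆ zariskiClosure (C ∩ face (Fin q) I)) :
    StrictlyAllowableWrt C I :=
  fun I' hI' => h ((minFace_subset_face I').trans hI')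

theorem not_minFace_subset_zariskiClosure_iff {S : Set (Euc (Fin p ⊕ Fin q))} :
    ¬ minFace p q ⊆ zariskiClosure S ↔
      ∃ f ∈ vanishingIdeal S, killCompl Sum.inr_injective f ≠ (0 : MvPolynomial (Fin q) ℝ) := by
  constructor
  · intro h
    obtain ⟨w, hw, hwS⟩ := Set.not_subset.1 h
    obtain ⟨f, hf, hfw⟩ : ∃ f ∈ vanishingIdeal S, eval (fun k => w k) f ≠ 0 := by
      simpa [zariskiClosure] using hwS
    refine ⟨f, hf, fun h0 => hfw ?_⟩
    have hw0 : (Sum.elim 0 fun k => w (Sum.inr k) : Fin p ⊕ Fin q → ℝ) = fun k => w k := by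
      funext k
      cases k with
      | inl i => exact (hw i (Finset.mem_univ i)).symm
      | inr k => rfl
    have := congrArg (eval fun k => w (Sum.inr k)) h0
    rwa [eval_killCompl_inr, map_zero, hw0] at this
  · rintro ⟨f, hf, hf0⟩ hsub
    refine hf0 (MvPolynomial.funext fun x => ?_)
    rw [eval_killCompl_inr, map_zero]
    have hx : (WithLp.toLp 2 (Sum.elim 0 x) : Euc (Fin p ⊕ Fin q)) ∈ minFace p q :=
      fun i _ => rfl
    exact hsub hx f hf

theorem not_minFace_subset_zariskiClosure_of_subset_iUnion {κ : Type} [Fintype κ]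
    {C : Set (Euc (Fin p ⊕ Fin q))} (S : κ → Set (Euc (Fin p ⊕ Fin q))) (hC : C ⊆ ⋃ k, S k)
    (hS : ∀ k, ¬ minFace p q ⊆ zariskiClosure (S k)) :
    ¬ minFace p q ⊆ zariskiClosure C := by
  choose f hfS hf0 using fun k => not_minFace_subset_zariskiClosure_iff.1 (hS k)
  refine not_minFace_subset_zariskiClosure_iff.2 ⟨∏ k, f k, fun z hz => ?_, ?_⟩
  · obtain ⟨k, hk⟩ := Set.mem_iUnion.1 (hC hz)
    rw [map_prod]
    exact Finset.prod_eq_zero (Finset.mem_univ k) (hfS k z hk)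
  · rw [map_prod]
    exact Finset.prod_ne_zero_iff.2 fun k _ => hf0 k

/-! ### Monomial charts -/

section Chart

variable {N : Matrix (Fin p) (Fin p) ℤ}

theorem monMapZ_eq_self_of_mem_minFace (hN : IsUnit N.det) {z : Euc (Fin p ⊕ Fin q)}
    (hz : z ∈ minFace p q) : monMapZ p q N z = z := by
  ext k
  cases k with
  | inl i =>
    obtain ⟨j, hj⟩ : ∃ j, N i j ≠ 0 := by
      by_contra! h
      exact not_isUnit_zero (Matrix.det_eq_zero_of_row_eq_zero i h ▸ hN)
    rw [hz i (Finset.mem_univ i)]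
    exact Finset.prod_eq_zero (Finset.mem_univ j)
      (by rw [hz j (Finset.mem_univ j)]; exact zero_zpow _ hj)
  | inr k => rfl

open Classical in
theorem monMapZ_mem_face {I : Finset (Fin p)} {z : Euc (Fin p ⊕ Fin q)} (hz : z ∈ face (Fin q) I) :
    monMapZ p q N z ∈ face (Fin q) (Finset.univ.filter fun i => ∃ j ∈ I, N i j ≠ 0) := by
  intro i hi
  obtain ⟨j, hj, hij⟩ := (Finset.mem_filter.1 hi).2
  exact Finset.prod_eq_zero (Finset.mem_univ j) (by rw [hz j hj]; exact zero_zpow _ hij)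

theorem eval_chartHom (hN0 : ∀ i j, 0 ≤ N i j) (z : Euc (Fin p ⊕ Fin q))
    (f : MvPolynomial (Fin p ⊕ Fin q) ℝ) :
    eval (fun k => z k) (chartHom ℝ p q N f) = eval (fun k => monMapZ p q N z k) f := by
  rw [chartHom, eval_aeval]
  refine congrArg (fun v => eval v f) (funext fun k => ?_)
  cases k with
  | inl i =>
    simp only [Sum.elim_inl, map_prod, map_pow, eval_X]
    exact Finset.prod_congr rfl fun j _ => by rw [← zpow_natCast, Int.toNat_of_nonneg (hN0 i j)]
  | inr k => simp [monMapZ]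

theorem zariskiClosure_preimage_monMapZ_subset (hN0 : ∀ i j, 0 ≤ N i j)
    (S : Set (Euc (Fin p ⊕ Fin q))) :
    zariskiClosure (monMapZ p q N ⁻¹' S) ⊆ monMapZ p q N ⁻¹' zariskiClosure S :=
  fun z hz f hf => by
    rw [← eval_chartHom hN0]
    exact hz _ fun y hy => by rw [eval_chartHom hN0]; exact hf _ hy

theorem not_minFace_subset_zariskiClosure_preimage (hN0 : ∀ i j, 0 ≤ N i j)
    (hN : IsUnit N.det) {S : Set (Euc (Fin p ⊕ Fin q))}
    (hS : ¬ minFace p q ⊆ zariskiClosure S) :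
    ¬ minFace p q ⊆ zariskiClosure (monMapZ p q N ⁻¹' S) :=
  fun hsub => hS fun w hw => by
    simpa [monMapZ_eq_self_of_mem_minFace hN hw] using
      zariskiClosure_preimage_monMapZ_subset hN0 S (hsub hw)

open Classical in
theorem not_minFace_subset_zariskiClosure_preimage_inter_face (hN0 : ∀ i j, 0 ≤ N i j)
    (hN : IsUnit N.det) {B : Set (Euc (Fin p ⊕ Fin q))} (hB : AlmostStrictlyAllowable B)
    {I : Finset (Fin p)} (hI : I.Nonempty) :
    ¬ minFace p q ⊆ zariskiClosure (monMapZ p q N ⁻¹' B ∩ face (Fin q) I) := by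
  obtain ⟨j, hj⟩ := hI
  obtain ⟨i, hi⟩ : ∃ i, N i j ≠ 0 := by
    by_contra! h
    exact not_isUnit_zero (Matrix.det_eq_zero_of_column_eq_zero j h ▸ hN)
  refine fun hsub => not_minFace_subset_zariskiClosure_preimage hN0 hN
    (hB (Finset.univ.filter fun i => ∃ j ∈ I, N i j ≠ 0)
      ⟨i, Finset.mem_filter.2 ⟨Finset.mem_univ i, j, hj, hi⟩⟩ Finset.univ)
    (hsub.trans (zariskiClosure_mono ?_))
  exact fun z hz => ⟨hz.1, monMapZ_mem_face hz.2⟩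

def chartExpBasis (N : Matrix (Fin p) (Fin p) ℤ) : Fin p ⊕ Fin q → (Fin p ⊕ Fin q →₀ ℕ) :=
  Sum.elim (fun i => ∑ j, Finsupp.single (Sum.inl j) (N i j).toNat)
    fun k => Finsupp.single (Sum.inr k) 1

def chartExp (N : Matrix (Fin p) (Fin p) ℤ) :
    (Fin p ⊕ Fin q →₀ ℕ) →+ (Fin p ⊕ Fin q →₀ ℕ) :=
  (Finsupp.linearCombination ℕ (chartExpBasis N)).toAddMonoidHom

theorem chartExp_apply_inl (σ : Fin p ⊕ Fin q →₀ ℕ) (j : Fin p) :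
    chartExp N σ (Sum.inl j) = ∑ i, σ (Sum.inl i) * (N i j).toNat := by
  simp [chartExp, chartExpBasis, Finsupp.linearCombination_apply, Finsupp.sum_fintype,
    Finsupp.single_apply]

theorem chartExp_apply_inr (σ : Fin p ⊕ Fin q →₀ ℕ) (k : Fin q) :
    chartExp N σ (Sum.inr k) = σ (Sum.inr k) := by
  simp [chartExp, chartExpBasis, Finsupp.linearCombination_apply, Finsupp.sum_fintype,
    Finsupp.single_apply]

theorem chartHom_eq_mapDomainAlgHom :
    chartHom ℝ p q N = AddMonoidAlgebra.mapDomainAlgHom ℝ ℝ (chartExp N) := by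
  refine MvPolynomial.algHom_ext fun k => ?_
  rw [AddMonoidAlgebra.mapDomainAlgHom_apply]
  conv_rhs => rw [X, ← single_eq_monomial, AddMonoidAlgebra.mapDomain_single]
  rw [single_eq_monomial, chartHom, aeval_X]
  simp only [chartExp, LinearMap.toAddMonoidHom_coe, Finsupp.linearCombination_single, one_smul]
  cases k with
  | inl i => simp [chartExpBasis, X_pow_eq_monomial, ← monomial_sum_one]
  | inr k => rfl

theorem coeff_chartHom_chartExp (hinj : Function.Injective (chartExp (q := q) N))
    (σ : Fin p ⊕ Fin q →₀ ℕ) (f : MvPolynomial (Fin p ⊕ Fin q) ℝ) :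
    coeff (chartExp N σ) (chartHom ℝ p q N f) = coeff σ f := by
  rw [chartHom_eq_mapDomainAlgHom, AddMonoidAlgebra.mapDomainAlgHom_apply]
  exact Finsupp.mapDomain_apply hinj _ _

theorem exists_chartExp_eq_of_mem_support {f : MvPolynomial (Fin p ⊕ Fin q) ℝ}
    {m : Fin p ⊕ Fin q →₀ ℕ} (hm : m ∈ (chartHom ℝ p q N f).support) :
    ∃ σ ∈ f.support, chartExp N σ = m := by
  rw [chartHom_eq_mapDomainAlgHom, AddMonoidAlgebra.mapDomainAlgHom_apply] at hm
  obtain ⟨σ, hσ, rfl⟩ := Finset.mem_image.1 (Finsupp.mapDomain_support hm)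
  exact ⟨σ, hσ, rfl⟩

def rExp (σ : Fin p ⊕ Fin q →₀ ℕ) : Fin p → ℤ := fun i => σ (Sum.inl i)

theorem cast_chartExp_apply_inl (hN0 : ∀ i j, 0 ≤ N i j) (σ : Fin p ⊕ Fin q →₀ ℕ) (j : Fin p) :
    (chartExp N σ (Sum.inl j) : ℤ) = (rExp σ ᵥ* N) j := by
  simp [chartExp_apply_inl, rExp, Matrix.vecMul, dotProduct, Int.toNat_of_nonneg (hN0 _ _)]

theorem chartExp_injective (hN0 : ∀ i j, 0 ≤ N i j) (hN : IsUnit N.det) :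
    Function.Injective (chartExp (q := q) N) := by
  intro σ τ h
  have hr : rExp σ = rExp τ :=
    Matrix.vecMul_injective_of_isUnit ((Matrix.isUnit_iff_isUnit_det N).2 hN) <| funext fun j => by
      show (rExp σ ᵥ* N) j = (rExp τ ᵥ* N) j
      rw [← cast_chartExp_apply_inl hN0, ← cast_chartExp_apply_inl hN0, h]
  ext (i | k)
  · exact Int.ofNat_inj.mp (congrFun hr i)
  · rw [← chartExp_apply_inr (N := N), h, chartExp_apply_inr]

theorem exists_chartHom_eq_monomial_mul (hN0 : ∀ i j, 0 ≤ N i j) (hN : IsUnit N.det)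
    {h : MvPolynomial (Fin p ⊕ Fin q) ℝ} {σ₀ : Fin p ⊕ Fin q →₀ ℕ} (hσ₀ : σ₀ ∈ h.support)
    (hmin : ∀ σ ∈ h.support, rExp σ₀ ᵥ* N ≤ rExp σ ᵥ* N) :
    ∃ (s : Fin p ⊕ Fin q →₀ ℕ) (g : MvPolynomial (Fin p ⊕ Fin q) ℝ), (∀ k, s (Sum.inr k) = 0) ∧
      chartHom ℝ p q N h = monomial s 1 * g ∧ killCompl Sum.inr_injective g ≠ 0 := by
  set κ₀ : Fin q →₀ ℕ := Finsupp.comapDomain Sum.inr σ₀ Sum.inr_injective.injOn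
  set m := Finsupp.mapDomain Sum.inr κ₀
  have hm_inl (j : Fin p) : m (Sum.inl j) = 0 := Finsupp.mapDomain_of_notMem_range _ _ (by simp)
  have hm_inr (k : Fin q) : m (Sum.inr k) = σ₀ (Sum.inr k) :=
    Finsupp.mapDomain_apply Sum.inr_injective _ _
  -- `m` is the `x`-part of `σ₀`, and `s` the `r`-part of its exponent in the chart
  set s := chartExp N σ₀ - m
  have hsm : s + m = chartExp N σ₀ := tsub_add_cancel_of_le <| Finsupp.le_def.2 fun k => by
    cases k <;> simp [hm_inl, hm_inr, chartExp_apply_inr]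
  have hs_le (m' : Fin p ⊕ Fin q →₀ ℕ) (hm' : m' ∈ (chartHom ℝ p q N h).support) : s ≤ m' := by
    obtain ⟨σ, hσ, rfl⟩ := exists_chartExp_eq_of_mem_support hm'
    refine Finsupp.le_def.2 fun k => ?_
    cases k with
    | inl j =>
      have := hmin σ hσ j
      rw [← cast_chartExp_apply_inl hN0, ← cast_chartExp_apply_inl hN0] at this
      simp only [s, Finsupp.tsub_apply, hm_inl, tsub_zero]
      exact Int.ofNat_le.mp this
    | inr k => simp [s, hm_inr, chartExp_apply_inr]
  refine ⟨s, (chartHom ℝ p q N h).divMonomial s, fun k => by simp [s, hm_inr, chartExp_apply_inr],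
    eq_monomial_mul_divMonomial hs_le, fun hg => mem_support_iff.1 hσ₀ ?_⟩
  have := congrArg (coeff κ₀) hg
  rwa [coeff_killCompl, coeff_divMonomial, hsm,
    coeff_chartHom_chartExp (chartExp_injective hN0 hN), coeff_zero] at this

theorem not_minFace_subset_zariskiClosure_preimage_inter_torus (hN0 : ∀ i j, 0 ≤ N i j)
    (hN : IsUnit N.det) {B : Set (Euc (Fin p ⊕ Fin q))} {h : MvPolynomial (Fin p ⊕ Fin q) ℝ}
    (hhB : h ∈ vanishingIdeal B) {σ₀ : Fin p ⊕ Fin q →₀ ℕ} (hσ₀ : σ₀ ∈ h.support)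
    (hmin : ∀ σ ∈ h.support, rExp σ₀ ᵥ* N ≤ rExp σ ᵥ* N) :
    ¬ minFace p q ⊆ zariskiClosure (monMapZ p q N ⁻¹' B ∩ {z | ∀ j, z (Sum.inl j) ≠ 0}) := by
  obtain ⟨s, g, hs, hhg, hg⟩ := exists_chartHom_eq_monomial_mul hN0 hN hσ₀ hmin
  refine not_minFace_subset_zariskiClosure_iff.2 ⟨g, fun z ⟨hzB, hz⟩ => ?_, hg⟩
  have h0 := hhB _ hzB
  rw [← eval_chartHom hN0, hhg, map_mul, eval_monomial, one_mul] at h0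
  refine (mul_eq_zero.1 h0).resolve_left (Finset.prod_ne_zero_iff.2 fun k hk => pow_ne_zero _ ?_)
  cases k with
  | inl j => exact hz j
  | inr k => exact absurd (hs k) (Finsupp.mem_support_iff.1 hk)

theorem strictlyAllowable_preimage_monMapZ (hN0 : ∀ i j, 0 ≤ N i j) (hN : IsUnit N.det)
    {B : Set (Euc (Fin p ⊕ Fin q))} (hB : AlmostStrictlyAllowable B)
    {h : MvPolynomial (Fin p ⊕ Fin q) ℝ} (hhB : h ∈ vanishingIdeal B)
    {σ₀ : Fin p ⊕ Fin q →₀ ℕ} (hσ₀ : σ₀ ∈ h.support)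
    (hmin : ∀ σ ∈ h.support, rExp σ₀ ᵥ* N ≤ rExp σ ᵥ* N) :
    StrictlyAllowable (monMapZ p q N ⁻¹' B) := by
  intro I
  refine strictlyAllowableWrt_of_not_minFace_subset ?_
  obtain rfl | hI := I.eq_empty_or_nonempty
  · refine not_minFace_subset_zariskiClosure_of_subset_iUnion
      (fun k : Option (Fin p) => k.elim (monMapZ p q N ⁻¹' B ∩ {z | ∀ j, z (Sum.inl j) ≠ 0})
        fun j => monMapZ p q N ⁻¹' B ∩ face (Fin q) {j}) (fun z hz => ?_) fun k => ?_
    · by_cases hz0 : ∃ j, z (Sum.inl j) = 0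
      · obtain ⟨j, hj⟩ := hz0
        exact Set.mem_iUnion.2 ⟨some j, hz.1, by simpa [face] using hj⟩
      · exact Set.mem_iUnion.2 ⟨none, hz.1, fun j hj => hz0 ⟨j, hj⟩⟩
    · cases k with
      | none => exact not_minFace_subset_zariskiClosure_preimage_inter_torus hN0 hN hhB hσ₀ hmin
      | some j =>
        exact not_minFace_subset_zariskiClosure_preimage_inter_face hN0 hN hB
          (Finset.singleton_nonempty j)
  · exact not_minFace_subset_zariskiClosure_preimage_inter_face hN0 hN hB hI

end Chart

/-! ### Towers of star subdivisions -/

theorem mem_raysOf {M : Matrix (Fin p) (Fin p) ℤ} {v : Fin p → ℤ} :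
    v ∈ raysOf M ↔ ∃ j, (fun i => M i j) = v := by
  simp [raysOf]

theorem mem_starSubdiv {F : Finset (Matrix (Fin p) (Fin p) ℤ)} {R : Finset (Fin p → ℤ)}
    {M₁ : Matrix (Fin p) (Fin p) ℤ} (h : M₁ ∈ starSubdiv F R) :
    (M₁ ∈ F ∧ ¬ R ⊆ raysOf M₁) ∨ ∃ M ∈ F, R ⊆ raysOf M ∧ ∃ r, (fun i => M i r) ∈ R ∧
      M₁ = M.updateCol r fun i => ∑ v ∈ R, v i := by
  simp only [starSubdiv, Finset.mem_union, Finset.mem_filter, Finset.mem_biUnion,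
    Finset.mem_image, Finset.mem_univ, true_and] at h
  rcases h with h | ⟨M, ⟨hM, hRM⟩, r, hr, rfl⟩
  · exact .inl h
  · exact .inr ⟨M, hM, hRM, r, hr, rfl⟩

theorem IsBlowupTower.trans {F₀ F₁ F₂ : Finset (Matrix (Fin p) (Fin p) ℤ)}
    (h₁ : IsBlowupTower p F₀ F₁) (h₂ : IsBlowupTower p F₁ F₂) : IsBlowupTower p F₀ F₂ := by
  induction h₂ with
  | refl => exact h₁
  | step F _ M hM J hJ ih => exact .step F₀ F ih M hM J hJ

theorem IsBlowupTower.forall_mem {P : Matrix (Fin p) (Fin p) ℤ → Prop}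
    (hP : ∀ M, P M → ∀ R ⊆ raysOf M, ∀ r, (fun i => M i r) ∈ R →
      P (M.updateCol r fun i => ∑ v ∈ R, v i))
    {F₀ F₁ : Finset (Matrix (Fin p) (Fin p) ℤ)} (hT : IsBlowupTower p F₀ F₁)
    (h₀ : ∀ M ∈ F₀, P M) : ∀ M ∈ F₁, P M := by
  induction hT with
  | refl => exact h₀
  | step F _ M hM J hJ ih =>
    intro M₁ hM₁
    rcases mem_starSubdiv hM₁ with ⟨hM₁F, -⟩ | ⟨M₂, hM₂, hR, r, hr, rfl⟩
    · exact ih M₁ hM₁F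
    · exact hP M₂ (ih M₂ hM₂) _ hR r hr

theorem det_updateCol_sum_of_subset_raysOf {M : Matrix (Fin p) (Fin p) ℤ}
    {R : Finset (Fin p → ℤ)} (hR : R ⊆ raysOf M) {r : Fin p} (hr : (fun i => M i r) ∈ R) :
    (M.updateCol r fun i => ∑ v ∈ R, v i).det = M.det := by
  have hcol (c : Fin p → ℤ) :
      (M.updateCol r c).det = Matrix.detRowAlternating (Function.update Mᵀ r c) := by
    rw [← Matrix.det_transpose, ← Matrix.updateRow_transpose]
    rfl
  have hlin : (M.updateCol r fun i => ∑ v ∈ R, v i).det = ∑ v ∈ R, (M.updateCol r v).det := by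
    simp only [hcol, ← Finset.sum_fn]
    exact (Matrix.detRowAlternating : (Fin p → ℤ) [⋀^Fin p]→ₗ[ℤ] ℤ).map_update_sum R r id Mᵀ
  rw [hlin, Finset.sum_eq_single_of_mem _ hr, Matrix.updateCol_eq_self]
  intro v hv hvr
  obtain ⟨k, rfl⟩ := mem_raysOf.1 (hR hv)
  have hkr : k ≠ r := fun h => hvr (h ▸ rfl)
  exact Matrix.det_zero_of_column_eq hkr fun i => by simp [hkr]

theorem IsBlowupTower.det_eq_one {F₀ F₁ : Finset (Matrix (Fin p) (Fin p) ℤ)}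
    (hT : IsBlowupTower p F₀ F₁) (h₀ : ∀ M ∈ F₀, M.det = 1) : ∀ M ∈ F₁, M.det = 1 :=
  hT.forall_mem (fun _ hM _ hR _ hr => (det_updateCol_sum_of_subset_raysOf hR hr).trans hM) h₀

theorem vecMul_updateCol_sum (d : Fin p → ℤ) (M : Matrix (Fin p) (Fin p) ℤ) (r : Fin p)
    (R : Finset (Fin p → ℤ)) :
    d ᵥ* (M.updateCol r fun i => ∑ v ∈ R, v i) = Function.update (d ᵥ* M) r (∑ v ∈ R, d ⬝ᵥ v) := by
  rw [Matrix.vecMul_updateCol, ← Finset.sum_fn, dotProduct_sum]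

theorem nonneg_vecMul_updateCol_sum {d : Fin p → ℤ} {M : Matrix (Fin p) (Fin p) ℤ}
    (hd : 0 ≤ d ᵥ* M) {R : Finset (Fin p → ℤ)} (hR : R ⊆ raysOf M) (r : Fin p) :
    0 ≤ d ᵥ* (M.updateCol r fun i => ∑ v ∈ R, v i) := by
  rw [vecMul_updateCol_sum]
  intro j
  rcases eq_or_ne j r with rfl | hj
  · rw [Function.update_self]
    refine Finset.sum_nonneg fun v hv => ?_
    obtain ⟨k, rfl⟩ := mem_raysOf.1 (hR hv)
    exact hd k
  · rw [Function.update_of_ne hj]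
    exact hd j

theorem IsBlowupTower.exists_nonneg_inv_mul {Fb F₀ F₁ : Finset (Matrix (Fin p) (Fin p) ℤ)}
    (hT : IsBlowupTower p F₀ F₁) (h₀ : ∀ M' ∈ F₀, ∃ M ∈ Fb, ∀ i j, 0 ≤ (M⁻¹ * M') i j) :
    ∀ M' ∈ F₁, ∃ M ∈ Fb, ∀ i j, 0 ≤ (M⁻¹ * M') i j :=
  hT.forall_mem (fun _ ⟨M, hM, hnn⟩ _ hR r _ =>
    ⟨M, hM, fun i => nonneg_vecMul_updateCol_sum (d := M⁻¹ i) (hnn i) hR r⟩) h₀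

def IsSignPure (d : Fin p → ℤ) (M : Matrix (Fin p) (Fin p) ℤ) : Prop :=
  0 ≤ d ᵥ* M ∨ d ᵥ* M ≤ 0

theorem IsBlowupTower.isSignPure {d : Fin p → ℤ} {F₀ F₁ : Finset (Matrix (Fin p) (Fin p) ℤ)}
    (hT : IsBlowupTower p F₀ F₁) (h₀ : ∀ M ∈ F₀, IsSignPure d M) :
    ∀ M ∈ F₁, IsSignPure d M := by
  refine hT.forall_mem (fun M hM R hR r _ => hM.imp (nonneg_vecMul_updateCol_sum · hR r) ?_) h₀
  intro hneg
  have := nonneg_vecMul_updateCol_sum (d := -d) (by simpa [Matrix.neg_vecMul] using hneg) hR r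
  simpa [Matrix.neg_vecMul] using this

/-! ### Making a covector sign-pure on every cone -/

def maxAbs (v : Fin p → ℤ) : ℕ := Finset.univ.sup fun j => (v j).natAbs

def maxAbsSet (v : Fin p → ℤ) : Finset (Fin p) :=
  Finset.univ.filter fun j => (v j).natAbs = maxAbs v

/-- Empty as soon as both signs occur among the entries of largest absolute value. -/
def oppositeSet (v : Fin p → ℤ) : Finset (Fin p) :=
  Finset.univ.filter fun j => ∀ k ∈ maxAbsSet v, v j * v k < 0

def badness (v : Fin p → ℤ) : ℕ ×ₗ ℕ ×ₗ ℕ :=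
  toLex (maxAbs v, toLex ((maxAbsSet v).card, (oppositeSet v).card))

theorem natAbs_le_maxAbs (v : Fin p → ℤ) (j : Fin p) : (v j).natAbs ≤ maxAbs v :=
  Finset.le_sup (f := fun j => (v j).natAbs) (Finset.mem_univ j)

theorem mem_maxAbsSet {v : Fin p → ℤ} {j : Fin p} :
    j ∈ maxAbsSet v ↔ (v j).natAbs = maxAbs v := by
  simp [maxAbsSet]

theorem maxAbs_le_of_badness_le {v w : Fin p → ℤ} (h : badness v ≤ badness w) :
    maxAbs v ≤ maxAbs w := by
  simp only [badness, Prod.Lex.toLex_le_toLex'] at h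
  exact h.1

theorem maxAbs_update_lt {v : Fin p → ℤ} {r : Fin p} {s : ℤ} (hs : s.natAbs < maxAbs v)
    (hr : ∀ k ≠ r, (v k).natAbs < maxAbs v) : maxAbs (Function.update v r s) < maxAbs v := by
  refine (Finset.sup_lt_iff (lt_of_le_of_lt (Nat.zero_le _) hs)).2 fun j _ => ?_
  rcases eq_or_ne j r with rfl | hj
  · simpa using hs
  · simpa [Function.update_of_ne hj] using hr j hj

theorem maxAbs_update_eq {v : Fin p → ℤ} {r k : Fin p} {s : ℤ} (hs : s.natAbs < maxAbs v)
    (hk : k ≠ r) (hkmax : (v k).natAbs = maxAbs v) :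
    maxAbs (Function.update v r s) = maxAbs v ∧
      maxAbsSet (Function.update v r s) = (maxAbsSet v).erase r := by
  have hmax : maxAbs (Function.update v r s) = maxAbs v := by
    refine le_antisymm (Finset.sup_le fun j _ => ?_) ?_
    · rcases eq_or_ne j r with rfl | hj
      · simpa using hs.le
      · simpa [Function.update_of_ne hj] using natAbs_le_maxAbs v j
    · simpa [Function.update_of_ne hk, hkmax] using natAbs_le_maxAbs (Function.update v r s) k
  refine ⟨hmax, Finset.ext fun j => ?_⟩
  rcases eq_or_ne j r with rfl | hj
  · simp [mem_maxAbsSet, hmax, hs.ne]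
  · simp [mem_maxAbsSet, hmax, hj]

theorem mem_oppositeSet_of_natAbs_lt {v : Fin p → ℤ} {u : Fin p}
    (hu : ∀ k, 0 ≤ v u * v k → (v k).natAbs ≤ (v u).natAbs) (hlt : (v u).natAbs < maxAbs v) :
    u ∈ oppositeSet v := by
  refine Finset.mem_filter.2 ⟨Finset.mem_univ u, fun k hk => not_le.1 fun h => ?_⟩
  have := hu k h
  rw [mem_maxAbsSet.1 hk] at this
  omega

theorem oppositeSet_eq_empty_of_notMem {v : Fin p → ℤ} {r o : Fin p} (ho : o ∈ maxAbsSet v)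
    (hro : v r * v o < 0) (hr : r ∉ oppositeSet v) : oppositeSet v = ∅ := by
  obtain ⟨k, hk, hrk⟩ : ∃ k ∈ maxAbsSet v, 0 ≤ v r * v k := by simpa [oppositeSet] using hr
  have hk0 : v k ≠ 0 := by
    intro h
    rw [mem_maxAbsSet, h, ← mem_maxAbsSet.1 ho] at hk
    have : v o = 0 := by omega
    simp [this] at hro
  have hok : v o * v k < 0 := by
    rcases mul_neg_iff.1 hro with ⟨h1, h2⟩ | ⟨h1, h2⟩ <;>
      rcases hk0.lt_or_gt with h3 | h3 <;> nlinarith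
  refine Finset.eq_empty_of_forall_notMem fun j hj => ?_
  have h := (Finset.mem_filter.1 hj).2
  -- three numbers cannot have pairwise negative products
  nlinarith [mul_pos_of_neg_of_neg (h o ho) (h k hk), sq_nonneg (v j * v o * v k)]

theorem oppositeSet_update {v : Fin p → ℤ} {r o : Fin p} {s : ℤ}
    (hset : maxAbsSet (Function.update v r s) = maxAbsSet v) (hr : r ∉ maxAbsSet v)
    (ho : o ∈ maxAbsSet v) (hso : 0 ≤ s * v o) :
    oppositeSet (Function.update v r s) = (oppositeSet v).erase r := by
  have hupd (k : Fin p) (hk : k ∈ maxAbsSet v) : Function.update v r s k = v k :=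
    Function.update_of_ne (ne_of_mem_of_not_mem hk hr) _ _
  ext j
  simp only [oppositeSet, hset, Finset.mem_filter, Finset.mem_erase, Finset.mem_univ, true_and]
  rcases eq_or_ne j r with rfl | hj
  · simp only [ne_eq, not_true_eq_false, false_and, iff_false, not_forall]
    exact ⟨o, ho, by rw [Function.update_self, hupd o ho]; exact not_lt.2 hso⟩
  · rw [Function.update_of_ne hj]
    exact ⟨fun h => ⟨hj, fun k hk => hupd k hk ▸ h k hk⟩,
      fun h k hk => (hupd k hk).symm ▸ h.2 k hk⟩

theorem badness_update_lt_self {v : Fin p → ℤ} {r : Fin p} {s : ℤ}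
    (hr : (v r).natAbs = maxAbs v) (hs : s.natAbs < maxAbs v) :
    badness (Function.update v r s) < badness v := by
  simp only [badness, Prod.Lex.toLex_lt_toLex']
  by_cases hk : ∃ k ≠ r, (v k).natAbs = maxAbs v
  · obtain ⟨k, hkr, hk⟩ := hk
    obtain ⟨hm, hset⟩ := maxAbs_update_eq hs hkr hk
    have h₁ := Finset.card_erase_of_mem (mem_maxAbsSet.2 hr)
    have h₂ := Finset.card_pos.2 ⟨r, mem_maxAbsSet.2 hr⟩
    rw [hset]
    exact ⟨hm.le, fun _ => ⟨by omega, fun _ => by omega⟩⟩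
  · push Not at hk
    have := maxAbs_update_lt hs fun k hkr => lt_of_le_of_ne (natAbs_le_maxAbs v k) (hk k hkr)
    exact ⟨this.le, fun h => absurd h this.ne⟩

theorem badness_update_add_lt {v vs : Fin p → ℤ} {r o : Fin p} (hro : v r * v o < 0)
    (hr : (v r).natAbs < maxAbs v) (ho : (v o).natAbs = maxAbs v)
    (hle : badness v ≤ badness vs) (hvs : 0 < (oppositeSet vs).card) :
    badness (Function.update v r (v r + v o)) < badness vs := by
  have hsign : 0 ≤ (v r + v o) * v o ∧ (v r + v o).natAbs < maxAbs v := by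
    rcases mul_neg_iff.1 hro with ⟨h1, h2⟩ | ⟨h1, h2⟩
    · exact ⟨mul_nonneg_of_nonpos_of_nonpos (by omega) h2.le, by omega⟩
    · exact ⟨mul_nonneg (by omega) h2.le, by omega⟩
  have hor : o ≠ r := by rintro rfl; omega
  obtain ⟨hm, hset⟩ := maxAbs_update_eq hsign.2 hor ho
  have hrS : r ∉ maxAbsSet v := fun h => hr.ne (mem_maxAbsSet.1 h)
  rw [Finset.erase_eq_of_notMem hrS] at hset
  simp only [badness, Prod.Lex.toLex_le_toLex', Prod.Lex.toLex_lt_toLex'] at hle ⊢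
  rw [hm, hset, oppositeSet_update hset hrS (mem_maxAbsSet.2 ho) hsign.1]
  refine ⟨hle.1, fun hm' => ⟨(hle.2 hm').1, fun hc => ?_⟩⟩
  by_cases hrO : r ∈ oppositeSet v
  · have h₁ := Finset.card_erase_of_mem hrO
    have h₂ := Finset.card_pos.2 ⟨r, hrO⟩
    have h₃ := (hle.2 hm').2 hc
    omega
  · rwa [Finset.erase_eq_of_notMem hrO,
      oppositeSet_eq_empty_of_notMem (mem_maxAbsSet.2 ho) hro hrO, Finset.card_empty]

theorem badness_update_lt {v vs : Fin p → ℤ} {r o : Fin p} (hro : v r * v o < 0)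
    (hmax : maxAbs vs = max (v r).natAbs (v o).natAbs) (hle : badness v ≤ badness vs)
    (hopp : (v r).natAbs < maxAbs vs → 0 < (oppositeSet vs).card) :
    badness (Function.update v r (v r + v o)) < badness vs := by
  have hm : maxAbs v = maxAbs vs := le_antisymm (maxAbs_le_of_badness_le hle)
    (hmax ▸ max_le (natAbs_le_maxAbs v r) (natAbs_le_maxAbs v o))
  by_cases hr : (v r).natAbs = maxAbs v
  · refine lt_of_lt_of_le (badness_update_lt_self hr ?_) hle
    rw [hm, hmax]
    rcases mul_neg_iff.1 hro with ⟨h1, h2⟩ | ⟨h1, h2⟩ <;> omega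
  · exact badness_update_add_lt hro (lt_of_le_of_ne (natAbs_le_maxAbs v r) hr) (by omega) hle
      (hopp (by omega))

theorem not_isSignPure_of_mem_raysOf {d a b : Fin p → ℤ} {M : Matrix (Fin p) (Fin p) ℤ}
    (ha : a ∈ raysOf M) (hb : b ∈ raysOf M) (hab : d ⬝ᵥ a * d ⬝ᵥ b < 0) : ¬ IsSignPure d M := by
  obtain ⟨i, rfl⟩ := mem_raysOf.1 ha
  obtain ⟨j, rfl⟩ := mem_raysOf.1 hb
  rintro (h | h)
  · have hi : 0 ≤ d ⬝ᵥ fun k => M k i := h i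
    have hj : 0 ≤ d ⬝ᵥ fun k => M k j := h j
    nlinarith
  · have hi : d ⬝ᵥ (fun k => M k i) ≤ 0 := h i
    have hj : d ⬝ᵥ (fun k => M k j) ≤ 0 := h j
    nlinarith

theorem badness_updateCol_pair_lt {d vs a b : Fin p → ℤ} (hab : d ⬝ᵥ a * d ⬝ᵥ b < 0)
    (hmax : maxAbs vs = max (d ⬝ᵥ a).natAbs (d ⬝ᵥ b).natAbs)
    (hopp : ∀ c ∈ ({a, b} : Finset (Fin p → ℤ)),
      (d ⬝ᵥ c).natAbs < maxAbs vs → 0 < (oppositeSet vs).card)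
    {M : Matrix (Fin p) (Fin p) ℤ} (hM : badness (d ᵥ* M) ≤ badness vs)
    (hRM : {a, b} ⊆ raysOf M) {r : Fin p} (hr : (fun i => M i r) ∈ ({a, b} : Finset _)) :
    badness (d ᵥ* M.updateCol r fun i => ∑ v ∈ {a, b}, v i) < badness vs := by
  have hab' : a ≠ b := by rintro rfl; nlinarith [mul_self_nonneg (d ⬝ᵥ a)]
  rw [vecMul_updateCol_sum, Finset.sum_pair hab']
  have hcol (j : Fin p) : (d ᵥ* M) j = d ⬝ᵥ fun i => M i j := rfl
  rcases Finset.mem_insert.1 hr with hra | hrb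
  · obtain ⟨o, ho⟩ := mem_raysOf.1 (hRM (Finset.mem_insert_of_mem (Finset.mem_singleton_self b)))
    have hvr : d ⬝ᵥ a = (d ᵥ* M) r := by rw [hcol, hra]
    have hvo : d ⬝ᵥ b = (d ᵥ* M) o := by rw [hcol, ho]
    rw [hvr, hvo] at hab hmax ⊢
    exact badness_update_lt hab hmax hM (hvr ▸ hopp a (by simp))
  · obtain ⟨o, ho⟩ := mem_raysOf.1 (hRM (Finset.mem_insert_self a _))
    have hvr : d ⬝ᵥ b = (d ᵥ* M) r := by rw [hcol, Finset.mem_singleton.1 hrb]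
    have hvo : d ⬝ᵥ a = (d ᵥ* M) o := by rw [hcol, ho]
    rw [hvr, hvo, mul_comm] at hab
    rw [hvr, hvo, max_comm] at hmax
    rw [hvr, hvo, add_comm]
    exact badness_update_lt hab hmax hM (hvr ▸ hopp b (by simp))

theorem isDershowitzMannaLT_map_val {α β : Type} [DecidableEq α] [Preorder β] (f : α → β)
    {s t : Finset α} {a : α} (ha : a ∈ s) (hat : a ∉ t) (h : ∀ x ∈ t, x ∉ s → f x < f a) :
    Multiset.IsDershowitzMannaLT (t.val.map f) (s.val.map f) := by
  have hst : s.val.filter (· ∈ t) = t.val.filter (· ∈ s) :=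
    (Multiset.Nodup.ext (s.nodup.filter _) (t.nodup.filter _)).2 fun x => by
      simp only [Multiset.mem_filter, Finset.mem_val, and_comm]
  refine ⟨(s.val.filter (· ∈ t)).map f, (t.val.filter (· ∉ s)).map f,
    (s.val.filter (· ∉ t)).map f, fun hZ => ?_, ?_, ?_, ?_⟩
  · have : f a ∈ (s.val.filter (· ∉ t)).map f :=
      Multiset.mem_map_of_mem f (Multiset.mem_filter.2 ⟨ha, hat⟩)
    simp [hZ] at this
  · rw [← Multiset.map_add, hst, Multiset.filter_add_not]
  · rw [← Multiset.map_add, Multiset.filter_add_not]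
  · simp only [Multiset.mem_map, Multiset.mem_filter, Finset.mem_val]
    rintro _ ⟨x, ⟨hxt, hxs⟩, rfl⟩
    exact ⟨f a, ⟨a, ⟨ha, hat⟩, rfl⟩, h x hxt hxs⟩

open Classical in
def badCones (d : Fin p → ℤ) (F : Finset (Matrix (Fin p) (Fin p) ℤ)) :
    Finset (Matrix (Fin p) (Fin p) ℤ) :=
  F.filter fun M => ¬ IsSignPure d M

def badnessMultiset (d : Fin p → ℤ) (F : Finset (Matrix (Fin p) (Fin p) ℤ)) :
    Multiset (ℕ ×ₗ ℕ ×ₗ ℕ) :=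
  (badCones d F).val.map fun M => badness (d ᵥ* M)

theorem mem_badCones {d : Fin p → ℤ} {F : Finset (Matrix (Fin p) (Fin p) ℤ)}
    {M : Matrix (Fin p) (Fin p) ℤ} : M ∈ badCones d F ↔ M ∈ F ∧ ¬ IsSignPure d M := by
  classical
  simp [badCones]

theorem badness_lt_of_mem_starSubdiv {d : Fin p → ℤ} {F₀ : Finset (Matrix (Fin p) (Fin p) ℤ)}
    {σ : Matrix (Fin p) (Fin p) ℤ}
    (hσ : ∀ M ∈ badCones d F₀, badness (d ᵥ* M) ≤ badness (d ᵥ* σ)) {u w : Fin p}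
    (hu : ∀ j, (d ᵥ* σ) j ≤ (d ᵥ* σ) u) (hw : ∀ j, (d ᵥ* σ) w ≤ (d ᵥ* σ) j)
    (hpos : 0 < (d ᵥ* σ) u) (hneg : (d ᵥ* σ) w < 0)
    {M₁ : Matrix (Fin p) (Fin p) ℤ} (hM₁ : M₁ ∈ starSubdiv F₀ (colSet σ {u, w})) :
    (M₁ ∈ F₀ ∧ ¬ colSet σ {u, w} ⊆ raysOf M₁) ∨ badness (d ᵥ* M₁) < badness (d ᵥ* σ) := by
  classical
  rcases mem_starSubdiv hM₁ with h | ⟨M, hM, hRM, r, hr, rfl⟩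
  · exact .inl h
  refine .inr ?_
  set vs := d ᵥ* σ
  have hR : colSet σ {u, w} = {fun i => σ i u, fun i => σ i w} := by
    simp [colSet, Finset.image_insert]
  rw [hR] at hRM hr ⊢
  have hab : vs u * vs w < 0 := mul_neg_of_pos_of_neg hpos hneg
  refine badness_updateCol_pair_lt hab ?_ ?_ (hσ M (mem_badCones.2 ⟨hM, ?_⟩)) hRM hr
  · refine le_antisymm (Finset.sup_le fun j _ => ?_)
      (max_le (natAbs_le_maxAbs vs u) (natAbs_le_maxAbs vs w))
    have := hu j
    have := hw j
    change (vs j).natAbs ≤ max (vs u).natAbs (vs w).natAbs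
    omega
  · simp only [Finset.mem_insert, Finset.mem_singleton, forall_eq_or_imp, forall_eq]
    refine ⟨fun hlt => Finset.card_pos.2 ⟨u, mem_oppositeSet_of_natAbs_lt (fun k hk => ?_) hlt⟩,
      fun hlt => Finset.card_pos.2 ⟨w, mem_oppositeSet_of_natAbs_lt (fun k hk => ?_) hlt⟩⟩
    · have := hu k
      have : 0 ≤ vs k := nonneg_of_mul_nonneg_right (by linarith) hpos
      omega
    · have := hw k
      have : vs k ≤ 0 := nonpos_of_mul_nonneg_right (by linarith) hneg
      omega
  · exact not_isSignPure_of_mem_raysOf (hRM (by simp)) (hRM (by simp)) hab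

theorem exists_isBlowupTower_badnessMultiset_lt (d : Fin p → ℤ)
    {F₀ : Finset (Matrix (Fin p) (Fin p) ℤ)} (hbad : (badCones d F₀).Nonempty) :
    ∃ F₁, IsBlowupTower p F₀ F₁ ∧
      (badnessMultiset d F₁).IsDershowitzMannaLT (badnessMultiset d F₀) := by
  classical
  obtain ⟨σ, hσ, hσmax⟩ := Finset.exists_max_image _ (fun M => badness (d ᵥ* M)) hbad
  obtain ⟨hσF, hσbad⟩ := mem_badCones.1 hσ
  obtain ⟨⟨j₁, hj₁⟩, ⟨j₂, hj₂⟩⟩ : (∃ j, (d ᵥ* σ) j < 0) ∧ ∃ j, 0 < (d ᵥ* σ) j := by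
    simpa [IsSignPure, Pi.le_def, not_or] using hσbad
  obtain ⟨u, -, hu⟩ := Finset.exists_max_image Finset.univ (d ᵥ* σ) ⟨j₁, Finset.mem_univ _⟩
  obtain ⟨w, -, hw⟩ := Finset.exists_min_image Finset.univ (d ᵥ* σ) ⟨j₁, Finset.mem_univ _⟩
  have hpos := hj₂.trans_le (hu j₂ (Finset.mem_univ _))
  have hneg := (hw j₁ (Finset.mem_univ _)).trans_lt hj₁
  have hchild := fun M₁ => badness_lt_of_mem_starSubdiv (M₁ := M₁) hσmax
    (fun j => hu j (Finset.mem_univ _)) (fun j => hw j (Finset.mem_univ _)) hpos hneg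
  refine ⟨_, .step F₀ F₀ (.refl F₀) σ hσF {u, w}
    (Finset.card_pair fun h => by rw [h] at hpos; omega).ge,
    isDershowitzMannaLT_map_val _ hσ (fun h => ?_) fun M₁ hM₁ hM₁F => ?_⟩
  · rcases hchild σ (mem_badCones.1 h).1 with ⟨-, hn⟩ | hlt
    · exact hn (Finset.image_subset_image (Finset.subset_univ _))
    · exact lt_irrefl _ hlt
  · rcases hchild M₁ (mem_badCones.1 hM₁).1 with ⟨hM, -⟩ | hlt
    · exact absurd (mem_badCones.2 ⟨hM, (mem_badCones.1 hM₁).2⟩) hM₁F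
    · exact hlt

theorem exists_isBlowupTower_forall_isSignPure (d : Fin p → ℤ)
    (F₀ : Finset (Matrix (Fin p) (Fin p) ℤ)) :
    ∃ F₁, IsBlowupTower p F₀ F₁ ∧ ∀ M ∈ F₁, IsSignPure d M := by
  suffices ∀ X F₀, badnessMultiset d F₀ = X →
      ∃ F₁, IsBlowupTower p F₀ F₁ ∧ ∀ M ∈ F₁, IsSignPure d M from this _ F₀ rfl
  intro X
  induction X using (Multiset.wellFounded_isDershowitzMannaLT (α := ℕ ×ₗ ℕ ×ₗ ℕ)).induction with
  | _ X ih =>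
    intro F₀ hX
    by_cases hbad : (badCones d F₀).Nonempty
    · obtain ⟨F₁, hT₁, hlt⟩ := exists_isBlowupTower_badnessMultiset_lt d hbad
      obtain ⟨F₂, hT₂, hP⟩ := ih _ (hX ▸ hlt) F₁ rfl
      exact ⟨F₂, hT₁.trans hT₂, hP⟩
    · exact ⟨F₀, .refl F₀, fun M hM => by_contra fun hM' => hbad ⟨M, mem_badCones.2 ⟨hM, hM'⟩⟩⟩

theorem exists_isBlowupTower_forall_forall_isSignPure (D : Finset (Fin p → ℤ))
    (F₀ : Finset (Matrix (Fin p) (Fin p) ℤ)) :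
    ∃ F₁, IsBlowupTower p F₀ F₁ ∧ ∀ M ∈ F₁, ∀ d ∈ D, IsSignPure d M := by
  classical
  induction D using Finset.induction_on generalizing F₀ with
  | empty => exact ⟨F₀, .refl F₀, by simp⟩
  | insert d D _ ih =>
    obtain ⟨F₁, hT₁, hP₁⟩ := exists_isBlowupTower_forall_isSignPure d F₀
    obtain ⟨F₂, hT₂, hP₂⟩ := ih F₁
    refine ⟨F₂, hT₁.trans hT₂, fun M hM d' hd' => ?_⟩
    rcases Finset.mem_insert.1 hd' with rfl | hd'
    · exact hT₂.isSignPure hP₁ M hM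
    · exact hP₂ M hM d' hd'

theorem isSignPure_vecMul_iff {d : Fin p → ℤ} {A M : Matrix (Fin p) (Fin p) ℤ} :
    IsSignPure (d ᵥ* A) M ↔ IsSignPure d (A * M) := by
  simp [IsSignPure, Matrix.vecMul_vecMul]

theorem exists_forall_vecMul_le_of_isSignPure {α : Type} (e : α → Fin p → ℤ)
    {N : Matrix (Fin p) (Fin p) ℤ} {s : Finset α} (hs : s.Nonempty)
    (h : ∀ a ∈ s, ∀ b ∈ s, IsSignPure (e a - e b) N) :
    ∃ a ∈ s, ∀ b ∈ s, e a ᵥ* N ≤ e b ᵥ* N := by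
  obtain ⟨a, ha, hmin⟩ := s.exists_minimalFor (fun a => e a ᵥ* N) hs
  refine ⟨a, ha, fun b hb => ?_⟩
  rcases h a ha b hb with hab | hab <;> rw [Matrix.sub_vecMul] at hab
  · exact hmin hb (sub_nonneg.1 hab)
  · exact sub_nonpos.1 hab

theorem exists_isBlowupTower_exists_least_rExp (F : Finset (Matrix (Fin p) (Fin p) ℤ))
    (h : Matrix (Fin p) (Fin p) ℤ → MvPolynomial (Fin p ⊕ Fin q) ℝ) :
    ∃ F', IsBlowupTower p F F' ∧ ∀ M' ∈ F', ∀ M ∈ F, h M ≠ 0 →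
      ∃ σ₀ ∈ (h M).support, ∀ σ ∈ (h M).support, rExp σ₀ ᵥ* (M⁻¹ * M') ≤ rExp σ ᵥ* (M⁻¹ * M') := by
  classical
  obtain ⟨F', hFF', hpure⟩ := exists_isBlowupTower_forall_forall_isSignPure
    (F.biUnion fun M => ((h M).support ×ˢ (h M).support).image
      fun στ => (rExp στ.1 - rExp στ.2) ᵥ* M⁻¹) F
  refine ⟨F', hFF', fun M' hM' M hM hM0 => exists_forall_vecMul_le_of_isSignPure _
    (Finset.nonempty_of_ne_empty (mt MvPolynomial.support_eq_empty.1 hM0)) fun σ hσ τ hτ => ?_⟩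
  refine isSignPure_vecMul_iff.1 (hpure M' hM' _ (Finset.mem_biUnion.2 ⟨M, hM, ?_⟩))
  exact Finset.mem_image.2 ⟨(σ, τ), Finset.mem_product.2 ⟨hσ, hτ⟩, rfl⟩

end SA

theorem statement_10_general (p q : ℕ) (F : Finset (Matrix (Fin p) (Fin p) ℤ))
    (hF : SA.IsBlowupFan p F)
    (B : Matrix (Fin p) (Fin p) ℤ → Set (Euc (Fin p ⊕ Fin q)))
    (hdim : ∀ M ∈ F, SA.dim (B M) < (((p + q : ℕ) : ℕ∞) : WithBot ℕ∞))
    (hasa : ∀ M ∈ F, SA.AlmostStrictlyAllowable (B M)) :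
    ∃ F' : Finset (Matrix (Fin p) (Fin p) ℤ), SA.IsBlowupTower p F F' ∧
      (∀ M' ∈ F', ∃ M ∈ F, ∀ i j, 0 ≤ (M⁻¹ * M') i j) ∧
      ∀ M' ∈ F', ∀ M ∈ F, (∀ i j, 0 ≤ (M⁻¹ * M') i j) →
        SA.StrictlyAllowable (SA.monMapZ p q (M⁻¹ * M') ⁻¹' B M) := by
  have hpoly (M : Matrix (Fin p) (Fin p) ℤ) : ∃ f : MvPolynomial (Fin p ⊕ Fin q) ℝ,
      M ∈ F → f ≠ 0 ∧ f ∈ SA.vanishingIdeal (B M) := by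
    by_cases hM : M ∈ F
    · obtain ⟨f, hf⟩ := SA.exists_ne_zero_mem_vanishingIdeal (S := B M) (by simpa using hdim M hM)
      exact ⟨f, fun _ => hf⟩
    · exact ⟨0, fun h => absurd h hM⟩
  choose h hh using hpoly
  have hdetF : ∀ M ∈ F, M.det = 1 := hF.det_eq_one (by simp)
  obtain ⟨F', hFF', hleast⟩ := SA.exists_isBlowupTower_exists_least_rExp F h
  refine ⟨F', hFF', hFF'.exists_nonneg_inv_mul fun M hM => ⟨M, hM, ?_⟩,
    fun M' hM' M hM hnn => ?_⟩
  · rw [Matrix.nonsing_inv_mul M (by simp [hdetF M hM])]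
    intro i j
    by_cases hij : i = j <;> simp [Matrix.one_apply, hij]
  · obtain ⟨σ₀, hσ₀, hmin⟩ := hleast M' hM' M hM (hh M hM).1
    refine SA.strictlyAllowable_preimage_monMapZ hnn ?_ (hasa M hM) (hh M hM).2 hσ₀ hmin
    simp [Matrix.det_mul, Matrix.det_nonsing_inv, hdetF M hM, hFF'.det_eq_one hdetF M' hM']

/-- Let `S' → ℝ^n = ℝ^p × ℝ^q` be a succession of permissible blow-ups
(recorded by its fan `F` of monomial charts), and let `B` be a closed semi-algebraic
subset of `S'` (given by its compatible family of traces in the charts) with `dim B < n`,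
which is almost strictly allowable in `S'`. Then there is a succession of permissible
blow-ups `μ : S̃' → S'` (a tower `F'` over `F`) such that `μ⁻¹(B)` is strictly allowable;
in each chart `M' ∈ F'` of `S̃'`, lying over a chart `M ∈ F` of `S'` through the monomial
map with exponent matrix `M⁻¹M'`, this reads as the strict allowability of the preimage
of the trace of `B`. -/
theorem statement_10 (p q : ℕ) (F : Finset (Matrix (Fin p) (Fin p) ℤ))
    (hF : SA.IsBlowupFan p F)
    (B : Matrix (Fin p) (Fin p) ℤ → Set (Euc (Fin p ⊕ Fin q)))
    (hclosed : ∀ M ∈ F, IsClosed (B M)) (hsa : ∀ M ∈ F, SA.IsSemialgebraic (B M))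
    (hcompat : SA.CompatibleFamily p q F B)
    (hdim : ∀ M ∈ F, SA.dim (B M) < (((p + q : ℕ) : ℕ∞) : WithBot ℕ∞))
    (hasa : ∀ M ∈ F, SA.AlmostStrictlyAllowable (B M)) :
    ∃ F' : Finset (Matrix (Fin p) (Fin p) ℤ), SA.IsBlowupTower p F F' ∧
      (∀ M' ∈ F', ∃ M ∈ F, ∀ i j, 0 ≤ (M⁻¹ * M') i j) ∧
      ∀ M' ∈ F', ∀ M ∈ F, (∀ i j, 0 ≤ (M⁻¹ * M') i j) →
        SA.StrictlyAllowable (SA.monMapZ p q (M⁻¹ * M') ⁻¹' B M) :=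
  statement_10_general p q F hF B hdim hasa
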